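/- Let X, Y be jointly centred Gaussian real random variables. Then E[X²Y²] = E[X²]E[Y²] + 2(E[XY])². -/

import Mathlib

open MeasureTheory ProbabilityTheory Real
open scoped NNReal

/-!
Polarization reduces mixed moments to moments of single Gaussians:
`(X + Y)⁴ + (X - Y)⁴ = 2X⁴ + 12X²Y² + 2Y⁴` and `(X + Y)² - (X - Y)² = 4XY`, while each of
`X, Y, X ± Y` is a centred Gaussian, whose fourth moment is three times the square of its second.
That last fact is read off the moment generating function `t ↦ exp (v t² / 2)` of
`gaussianReal 0 v`, whose second and fourth derivatives at `0` are `v` and `3v²`.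
-/

lemma deriv_mul_exp_mul_sq_div_two (c : ℝ) {p : ℝ → ℝ} (hp : Differentiable ℝ p) :
    deriv (fun t ↦ p t * exp (c * t ^ 2 / 2))
      = fun t ↦ (deriv p t + c * t * p t) * exp (c * t ^ 2 / 2) := by
  ext t
  have hq : HasDerivAt (fun t ↦ c * t ^ 2 / 2) (c * t) t :=
    (((hasDerivAt_pow 2 t).const_mul c).div_const 2).congr_deriv (by norm_num; ring)
  rw [((hp t).hasDerivAt.fun_mul hq.exp).deriv]
  ring

lemma iteratedDeriv_exp_mul_sq_div_two (c : ℝ) :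
    iteratedDeriv 2 (fun t ↦ exp (c * t ^ 2 / 2)) 0 = c ∧
      iteratedDeriv 4 (fun t ↦ exp (c * t ^ 2 / 2)) 0 = 3 * c ^ 2 := by
  have d1 : deriv (fun t ↦ exp (c * t ^ 2 / 2)) = fun t ↦ (c * t) * exp (c * t ^ 2 / 2) := by
    simpa using deriv_mul_exp_mul_sq_div_two c (p := fun _ ↦ 1) (by fun_prop)
  have d2 : deriv (fun t ↦ (c * t) * exp (c * t ^ 2 / 2))
      = fun t ↦ (c + c ^ 2 * t ^ 2) * exp (c * t ^ 2 / 2) := by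
    rw [deriv_mul_exp_mul_sq_div_two c (by fun_prop)]
    ext t; simp; ring
  have d3 : deriv (fun t ↦ (c + c ^ 2 * t ^ 2) * exp (c * t ^ 2 / 2))
      = fun t ↦ (3 * c ^ 2 * t + c ^ 3 * t ^ 3) * exp (c * t ^ 2 / 2) := by
    rw [deriv_mul_exp_mul_sq_div_two c (by fun_prop)]
    ext t; simp (disch := fun_prop) [deriv_fun_add]; ring
  have d4 : deriv (fun t ↦ (3 * c ^ 2 * t + c ^ 3 * t ^ 3) * exp (c * t ^ 2 / 2))
      = fun t ↦ (3 * c ^ 2 + 6 * c ^ 3 * t ^ 2 + c ^ 4 * t ^ 4) * exp (c * t ^ 2 / 2) := by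
    rw [deriv_mul_exp_mul_sq_div_two c (by fun_prop)]
    ext t; simp (disch := fun_prop) [deriv_fun_add]; ring
  simp [iteratedDeriv_eq_iterate, Function.iterate_succ_apply', d1, d2, d3, d4]

namespace ProbabilityTheory

lemma integral_pow_gaussianReal_eq_iteratedDeriv (v : ℝ≥0) (n : ℕ) :
    ∫ x, x ^ n ∂gaussianReal 0 v = iteratedDeriv n (fun t ↦ exp (v * t ^ 2 / 2)) 0 := by
  have h := iteratedDeriv_mgf_zero (X := id) (μ := gaussianReal 0 v) (by simp) n
  simp only [mgf_id_gaussianReal, zero_mul, zero_add] at h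
  rw [h]
  rfl

lemma integral_sq_gaussianReal (v : ℝ≥0) : ∫ x, x ^ 2 ∂gaussianReal 0 v = v := by
  rw [integral_pow_gaussianReal_eq_iteratedDeriv, (iteratedDeriv_exp_mul_sq_div_two _).1]

lemma integral_pow_four_gaussianReal (v : ℝ≥0) :
    ∫ x, x ^ 4 ∂gaussianReal 0 v = 3 * (v : ℝ) ^ 2 := by
  rw [integral_pow_gaussianReal_eq_iteratedDeriv, (iteratedDeriv_exp_mul_sq_div_two _).2]

variable {Ω : Type*} {mΩ : MeasurableSpace Ω} {μ : Measure Ω}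

lemma hasLaw_of_map_eq {𝓧 : Type*} {m𝓧 : MeasurableSpace 𝓧} {ν : Measure 𝓧} [NeZero ν]
    {Z : Ω → 𝓧} (h : μ.map Z = ν) : HasLaw Z ν μ :=
  ⟨.of_map_ne_zero (h ▸ NeZero.ne ν), h⟩

section HasLaw

variable {Z : Ω → ℝ} {m : ℝ} {v : ℝ≥0}

lemma HasLaw.integrable_pow_of_gaussianReal (hZ : HasLaw Z (gaussianReal m v) μ) (n : ℕ) :
    Integrable (fun ω ↦ Z ω ^ n) μ := by
  have h := integrable_pow_of_mem_interior_integrableExpSet (X := id) (μ := gaussianReal m v)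
    (by simp) n
  rwa [← hZ.map_eq, integrable_map_measure (by fun_prop) hZ.aemeasurable] at h

lemma HasLaw.integral_pow_four_of_gaussianReal (hZ : HasLaw Z (gaussianReal 0 v) μ) :
    ∫ ω, Z ω ^ 4 ∂μ = 3 * (∫ ω, Z ω ^ 2 ∂μ) ^ 2 := by
  have h2 : ∫ ω, Z ω ^ 2 ∂μ = v :=
    (hZ.integral_comp (f := fun x ↦ x ^ 2) (by fun_prop)).trans (integral_sq_gaussianReal v)
  have h4 : ∫ ω, Z ω ^ 4 ∂μ = 3 * (v : ℝ) ^ 2 :=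
    (hZ.integral_comp (f := fun x ↦ x ^ 4) (by fun_prop)).trans
      (integral_pow_four_gaussianReal v)
  rw [h2, h4]

end HasLaw

end ProbabilityTheory

namespace MeasureTheory

variable {Ω : Type*} {mΩ : MeasurableSpace Ω} {μ : Measure Ω} {X Y : Ω → ℝ}

lemma integral_mul_eq_integral_add_sq_sub_integral_sub_sq
    (hP : Integrable (fun ω ↦ (X ω + Y ω) ^ 2) μ) (hM : Integrable (fun ω ↦ (X ω - Y ω) ^ 2) μ) :
    ∫ ω, X ω * Y ω ∂μ = ((∫ ω, (X ω + Y ω) ^ 2 ∂μ) - ∫ ω, (X ω - Y ω) ^ 2 ∂μ) / 4 := by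
  rw [← integral_sub hP hM, ← integral_div]
  congr 1 with ω
  ring

lemma integral_add_sq_add_integral_sub_sq (hX : Integrable (fun ω ↦ X ω ^ 2) μ)
    (hY : Integrable (fun ω ↦ Y ω ^ 2) μ) (hP : Integrable (fun ω ↦ (X ω + Y ω) ^ 2) μ)
    (hM : Integrable (fun ω ↦ (X ω - Y ω) ^ 2) μ) :
    (∫ ω, (X ω + Y ω) ^ 2 ∂μ) + ∫ ω, (X ω - Y ω) ^ 2 ∂μ
      = 2 * (∫ ω, X ω ^ 2 ∂μ) + 2 * ∫ ω, Y ω ^ 2 ∂μ := by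
  rw [← integral_add hP hM, ← integral_const_mul, ← integral_const_mul,
    ← integral_add (hX.const_mul 2) (hY.const_mul 2)]
  congr 1 with ω
  ring

lemma integral_sq_mul_sq_eq_polarization (hX : Integrable (fun ω ↦ X ω ^ 4) μ)
    (hY : Integrable (fun ω ↦ Y ω ^ 4) μ) (hP : Integrable (fun ω ↦ (X ω + Y ω) ^ 4) μ)
    (hM : Integrable (fun ω ↦ (X ω - Y ω) ^ 4) μ) :
    ∫ ω, X ω ^ 2 * Y ω ^ 2 ∂μ = ((∫ ω, (X ω + Y ω) ^ 4 ∂μ) + (∫ ω, (X ω - Y ω) ^ 4 ∂μ)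
      - 2 * (∫ ω, X ω ^ 4 ∂μ) - 2 * ∫ ω, Y ω ^ 4 ∂μ) / 12 := by
  have h : (fun ω ↦ X ω ^ 2 * Y ω ^ 2) = fun ω ↦
      ((X ω + Y ω) ^ 4 + (X ω - Y ω) ^ 4 - 2 * X ω ^ 4 - 2 * Y ω ^ 4) / 12 := by
    ext ω; ring
  rw [h, integral_div, integral_sub (by fun_prop) (by fun_prop),
    integral_sub (by fun_prop) (by fun_prop), integral_add hP hM, integral_const_mul,
    integral_const_mul]

end MeasureTheory

theorem isserlis_fourth_moment_general
    {Ω : Type*} [MeasureSpace Ω]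
    (X Y : Ω → ℝ)
    (hGauss : ∀ a b : ℝ, ∃ v : ℝ≥0,
      Measure.map (fun ω => a * X ω + b * Y ω) volume = gaussianReal 0 v) :
    ∫ ω, (X ω) ^ 2 * (Y ω) ^ 2
      = (∫ ω, (X ω) ^ 2) * (∫ ω, (Y ω) ^ 2) + 2 * (∫ ω, X ω * Y ω) ^ 2 := by
  have law (a b : ℝ) : ∃ v : ℝ≥0, HasLaw (fun ω ↦ a * X ω + b * Y ω) (gaussianReal 0 v) :=
    (hGauss a b).imp fun _ ↦ hasLaw_of_map_eq
  obtain ⟨_, hX⟩ : ∃ v : ℝ≥0, HasLaw X (gaussianReal 0 v) := by simpa using law 1 0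
  obtain ⟨_, hY⟩ : ∃ v : ℝ≥0, HasLaw Y (gaussianReal 0 v) := by simpa using law 0 1
  obtain ⟨_, hP⟩ : ∃ v : ℝ≥0, HasLaw (fun ω ↦ X ω + Y ω) (gaussianReal 0 v) := by
    simpa using law 1 1
  obtain ⟨_, hM⟩ : ∃ v : ℝ≥0, HasLaw (fun ω ↦ X ω - Y ω) (gaussianReal 0 v) := by
    simpa [sub_eq_add_neg] using law 1 (-1)
  have second_moments := integral_add_sq_add_integral_sub_sq
    (hX.integrable_pow_of_gaussianReal 2) (hY.integrable_pow_of_gaussianReal 2)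
    (hP.integrable_pow_of_gaussianReal 2) (hM.integrable_pow_of_gaussianReal 2)
  rw [integral_sq_mul_sq_eq_polarization (hX.integrable_pow_of_gaussianReal 4)
      (hY.integrable_pow_of_gaussianReal 4) (hP.integrable_pow_of_gaussianReal 4)
      (hM.integrable_pow_of_gaussianReal 4),
    integral_mul_eq_integral_add_sq_sub_integral_sub_sq (hP.integrable_pow_of_gaussianReal 2)
      (hM.integrable_pow_of_gaussianReal 2),
    hX.integral_pow_four_of_gaussianReal, hY.integral_pow_four_of_gaussianReal,
    hP.integral_pow_four_of_gaussianReal, hM.integral_pow_four_of_gaussianReal,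
    eq_sub_of_add_eq' second_moments]
  ring

/-- Isserlis' theorem for fourth moments: if `X, Y` are jointly centred Gaussian (i.e. every
linear combination `aX + bY` is a centred Gaussian variable), then
`E[X²Y²] = E[X²] E[Y²] + 2 (E[XY])²`. -/
theorem isserlis_fourth_moment
    {Ω : Type*} [MeasureSpace Ω] [IsProbabilityMeasure (volume : Measure Ω)]
    (X Y : Ω → ℝ) (hX : Measurable X) (hY : Measurable Y)
    (hGauss : ∀ a b : ℝ, ∃ v : ℝ≥0,
      Measure.map (fun ω => a * X ω + b * Y ω) volume = gaussianReal 0 v) :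
    ∫ ω, (X ω) ^ 2 * (Y ω) ^ 2
      = (∫ ω, (X ω) ^ 2) * (∫ ω, (Y ω) ^ 2) + 2 * (∫ ω, X ω * Y ω) ^ 2 :=
  isserlis_fourth_moment_general X Y hGauss
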